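/- Let A be a multiset of positive integers in which 1 occurs exactly once and each positive integer j occurs at most j times. Then f_{A,a}(x)·f_{A,b}(x) > f_{A,a+b}(x) for all real x ≥ 5 and positive integers a, b except a = b = 1; for a = b = 1, f_{A,1}(5)² ≥ f_{A,2}(5) (with equality iff 2 occurs exactly twice in A), and f_{A,1}(x)² > f_{A,2}(x) for all x > 5. -/

import Mathlib

open scoped Classical

/-- Sum of those divisors of `j` that belong to the multiset of positive integers
with multiplicity function `μ`, counted with multiplicity: `σ_A(j) = ∑_{d ∣ j} d·μ(d)`. -/
noncomputable def sigmaA (μ : ℕ → ℕ) (j : ℕ) : ℕ := ∑ d ∈ Nat.divisors j, d * μ d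

/-- The polynomials `f_{A,n}(x)` associated with the multiset of positive integers
with multiplicity function `μ`, defined (equivalently to the generating function
`∑ f_{A,n}(x) qⁿ = ∏_{a∈A} (1/(1-q^a))^x`) by `f_{A,0} = 1` and the recurrence
`f_{A,n}(x) = (x/n) ∑_{j=1}^{n} σ_A(j) f_{A,n-j}(x)`. -/
noncomputable def fA (μ : ℕ → ℕ) : ℕ → ℝ → ℝ
  | 0, _ => 1
  | n + 1, x =>
      x / (n + 1) * ∑ j ∈ Finset.range (n + 1), (sigmaA μ (j + 1) : ℝ) * fA μ (n - j) x
  decreasing_by exact Nat.lt_succ_of_le (Nat.sub_le n j)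

/-- `f_{A,n}(x)` for an ordinary set `A` of positive integers. -/
noncomputable def fS (A : Set ℕ) : ℕ → ℝ → ℝ := fA (fun a => if a ∈ A then 1 else 0)

/-! With `F_n = f_{A,n}(x)` the recurrence reads `n F_n = x ∑_{i<n} σ_A(n-i) F_i`. For
`1 ≤ a ≤ b`, split the sum for `F_{a+b}` at `i = a`. The tail `∑_{i<b} σ_A(b-i) F_{a+i}` is at
most `F_a · b F_b / x` by induction on `a + b`. The head `∑_{i<a} σ_A(a+b-i) F_i` is strictly
less than `F_b · a F_a / x`, because `σ_A(m) ≤ σ₂(m) ≤ 2m²` is small against the lower bound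
`F_b ≥ C(b+4,4)` valid for `x ≥ 5`. Adding gives `(a+b) F_{a+b} < (a+b) F_a F_b`. The case
`a = b = 1` is the identity `F_1² - F_2 = x (x - 1 - 2μ(2)) / 2`. -/

open Finset ArithmeticFunction
open scoped ArithmeticFunction.sigma

lemma sigma_two_le_two_mul_sq (m : ℕ) : σ 2 m ≤ 2 * m ^ 2 := by
  rcases m.eq_zero_or_pos with rfl | hm
  · simp
  have hdiv : Nat.divisors m ⊆ Ioo 0 (m + 1) := fun d hd => by
    have := Nat.divisor_le hd
    have := Nat.pos_of_mem_divisors hd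
    simp only [mem_Ioo]; omega
  suffices (σ 2 m : ℝ) ≤ 2 * m ^ 2 by exact_mod_cast this
  calc (σ 2 m : ℝ) = ∑ d ∈ Nat.divisors m, (m : ℝ) ^ 2 * ((d : ℝ) ^ 2)⁻¹ := by
        rw [sigma_eq_sum_div, Nat.cast_sum]
        refine sum_congr rfl fun d hd => ?_
        have hd0 : (d : ℝ) ≠ 0 := by exact_mod_cast (Nat.pos_of_mem_divisors hd).ne'
        rw [Nat.cast_pow, Nat.cast_div (Nat.dvd_of_mem_divisors hd) hd0, div_pow, div_eq_mul_inv]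
    _ ≤ (m : ℝ) ^ 2 * ∑ d ∈ Ioo 0 (m + 1), ((d : ℝ) ^ 2)⁻¹ := by
        rw [← mul_sum]
        exact mul_le_mul_of_nonneg_left
          (sum_le_sum_of_subset_of_nonneg hdiv fun _ _ _ => by positivity) (by positivity)
    _ ≤ (m : ℝ) ^ 2 * 2 := by
        gcongr
        simpa using sum_Ioo_inv_sq_le (α := ℝ) 0 (m + 1)
    _ = 2 * m ^ 2 := mul_comm _ _

lemma twentyFour_mul_choose_four (n : ℕ) :
    24 * (n + 4).choose 4 = (n + 4) * (n + 3) * (n + 2) * (n + 1) := by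
  rw [show 24 = Nat.factorial 4 from rfl, ← Nat.descFactorial_eq_factorial_mul_choose]
  simp [Nat.descFactorial_succ]
  ring

lemma sigma_two_lt_choose {b m : ℕ} (hb : 9 ≤ b) (hm : m ≤ 2 * b) : σ 2 m < (b + 4).choose 4 := by
  have hm2 : 2 * m ^ 2 ≤ 8 * b ^ 2 := by nlinarith
  have h4 : 9 * b ^ 3 ≤ b ^ 4 := by rw [pow_succ b 3, mul_comm]; exact Nat.mul_le_mul_left _ hb
  have h3 : 9 * b ^ 2 ≤ b ^ 3 := by rw [pow_succ b 2, mul_comm]; exact Nat.mul_le_mul_left _ hb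
  have : 24 * (8 * b ^ 2) < 24 * (b + 4).choose 4 := by
    rw [twentyFour_mul_choose_four]; ring_nf; omega
  linarith [sigma_two_le_two_mul_sq m]

/-- Checked by evaluation for `b < 9`; beyond that `σ₂(m) ≤ 2m² < C(b+4,4)` termwise. -/
lemma sigma_two_weights_lt {a b : ℕ} (ha : 1 ≤ a) (hab : a ≤ b) (hb : 2 ≤ b) :
    (∀ i ∈ Ioo 0 a, σ 2 (a + b - i) ≤ (b + 4).choose 4) ∧
    ∑ i ∈ range a, σ 2 (a + b - i) * (i + 4).choose 4
      < (b + 4).choose 4 * ∑ i ∈ range a, (i + 4).choose 4 := by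
  rcases lt_or_ge b 9 with hb9 | hb9
  · refine ⟨(by decide : ∀ b < 9, ∀ a < b + 1, ∀ i ∈ Ioo 0 a,
      σ 2 (a + b - i) ≤ (b + 4).choose 4) b hb9 a (by omega), ?_⟩
    exact (by decide : ∀ b < 9, ∀ a < b + 1, 1 ≤ a → 2 ≤ b →
      ∑ i ∈ range a, σ 2 (a + b - i) * (i + 4).choose 4
        < (b + 4).choose 4 * ∑ i ∈ range a, (i + 4).choose 4) b hb9 a (by omega) ha hb
  · have hlt : ∀ i, σ 2 (a + b - i) < (b + 4).choose 4 := fun i =>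
      sigma_two_lt_choose hb9 (by omega)
    refine ⟨fun i _ => (hlt i).le, ?_⟩
    rw [mul_sum]
    exact sum_lt_sum_of_nonempty (nonempty_range_iff.2 (by omega)) fun i _ =>
      Nat.mul_lt_mul_of_pos_right (hlt i) (Nat.choose_pos (by omega))

section SigmaA

variable {μ : ℕ → ℕ}

lemma one_le_sigmaA (hμ1 : 1 ≤ μ 1) {m : ℕ} (hm : m ≠ 0) : 1 ≤ sigmaA μ m :=
  hμ1.trans <| by
    unfold sigmaA
    simpa using single_le_sum (f := fun d => d * μ d) (fun _ _ => Nat.zero_le _)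
      (Nat.one_mem_divisors.2 hm)

lemma sigmaA_le_sigma_two (hμ : ∀ j, μ j ≤ j) (m : ℕ) : sigmaA μ m ≤ σ 2 m := by
  rw [sigma_apply]
  exact sum_le_sum fun d _ => by rw [sq]; exact Nat.mul_le_mul_left d (hμ d)

lemma sigmaA_one (hμ1 : μ 1 = 1) : sigmaA μ 1 = 1 := by simp [sigmaA, hμ1]

lemma sigmaA_two (hμ1 : μ 1 = 1) : sigmaA μ 2 = 1 + 2 * μ 2 := by
  have h : Nat.divisors 2 = {1, 2} := by decide
  simp [sigmaA, h, hμ1]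

end SigmaA

lemma natCast_mul_fA (μ : ℕ → ℕ) (x : ℝ) (n : ℕ) :
    n * fA μ n x = x * ∑ i ∈ range n, (sigmaA μ (n - i) : ℝ) * fA μ i x := by
  cases n with
  | zero => simp
  | succ n =>
    rw [fA, ← sum_range_reflect]
    have hn : (n + 1 : ℝ) ≠ 0 := by positivity
    push_cast
    rw [← mul_assoc, mul_div_cancel₀ _ hn]
    congr 1
    refine sum_congr rfl fun j hj => ?_
    have := mem_range.1 hj
    rw [show n - j + 1 = n + 1 - j by omega, show n - (n - j) = j by omega]

/-- For `x ≥ k + 1` the polynomial `f_{A,n}` dominates its value `C(n+k,k)` for `A = {1}`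
at `x = k + 1`. -/
lemma choose_le_fA {μ : ℕ → ℕ} (hμ1 : 1 ≤ μ 1) {k : ℕ} {x : ℝ} (hx : k + 1 ≤ x) (n : ℕ) :
    ((n + k).choose k : ℝ) ≤ fA μ n x := by
  induction n using Nat.strong_induction_on with
  | _ n ih =>
  cases n with
  | zero => simp [fA]
  | succ n =>
    have hchoose : (n + 1) * (n + 1 + k).choose k = (k + 1) * (n + k + 1).choose (k + 1) := by
      have := Nat.choose_succ_right_eq (n + k + 1) k
      rw [show n + k + 1 - k = n + 1 by omega] at this
      rw [show n + 1 + k = n + k + 1 by omega, mul_comm, ← this, mul_comm]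
    refine le_of_mul_le_mul_left ?_ (by positivity : (0 : ℝ) < (n + 1 : ℕ))
    calc ((n + 1 : ℕ) : ℝ) * (n + 1 + k).choose k
        = (k + 1) * ∑ i ∈ range (n + 1), ((i + k).choose k : ℝ) := by
          rw [← Nat.cast_sum, Nat.sum_range_add_choose]; exact_mod_cast hchoose
      _ ≤ x * ∑ i ∈ range (n + 1), (sigmaA μ (n + 1 - i) : ℝ) * fA μ i x := by
          gcongr with i hi
          · exact (by linarith : (0 : ℝ) ≤ k + 1).trans hx
          rw [← one_mul ((i + k).choose k : ℝ)]
          gcongr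
          · exact_mod_cast one_le_sigmaA hμ1 (by have := mem_range.1 hi; omega)
          · exact ih i (mem_range.1 hi)
      _ = _ := (natCast_mul_fA μ x (n + 1)).symm

section Inequality

variable {μ : ℕ → ℕ} {x : ℝ}

lemma one_le_fA (hμ1 : 1 ≤ μ 1) (hx : 1 ≤ x) (n : ℕ) : 1 ≤ fA μ n x := by
  simpa using choose_le_fA (k := 0) hμ1 (by simpa using hx) n

/-- Only `f_{A,0} = 1` carries a possibly positive coefficient `σ₂(a+b) - C(b+4,4)`; it is
absorbed using the lower bounds `C(i+4,4) ≤ f_{A,i}` on the other terms. -/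
lemma sum_sigmaA_mul_fA_lt (hμ1 : 1 ≤ μ 1) (hμ : ∀ j, μ j ≤ j) (hx : 5 ≤ x) {a b : ℕ}
    (ha : 1 ≤ a) (hab : a ≤ b) (hb : 2 ≤ b) :
    ∑ i ∈ range a, (sigmaA μ (a + b - i) : ℝ) * fA μ i x
      < fA μ b x * ∑ i ∈ range a, (sigmaA μ (a - i) : ℝ) * fA μ i x := by
  obtain ⟨hcoeff, hsum⟩ := sigma_two_weights_lt ha hab hb
  have hQ : ∀ i, ((i + 4).choose 4 : ℝ) ≤ fA μ i x := choose_le_fA hμ1 (by push_cast; linarith)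
  have hF : ∀ i, 0 ≤ fA μ i x := fun i => zero_le_one.trans (one_le_fA hμ1 (by linarith) i)
  calc ∑ i ∈ range a, (sigmaA μ (a + b - i) : ℝ) * fA μ i x
      ≤ ∑ i ∈ range a, ((σ 2 (a + b - i) : ℝ) - (b + 4).choose 4) * fA μ i x
          + (b + 4).choose 4 * ∑ i ∈ range a, fA μ i x := by
        rw [mul_sum, ← sum_add_distrib]
        refine sum_le_sum fun i _ => ?_
        rw [← add_mul, sub_add_cancel]
        exact mul_le_mul_of_nonneg_right (by exact_mod_cast sigmaA_le_sigma_two hμ _) (hF i)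
    _ ≤ ∑ i ∈ range a, ((σ 2 (a + b - i) : ℝ) - (b + 4).choose 4) * (i + 4).choose 4
          + (b + 4).choose 4 * ∑ i ∈ range a, fA μ i x := by
        refine add_le_add_left (sum_le_sum fun i hi => ?_) _
        rcases Nat.eq_zero_or_pos i with rfl | hi0
        · simp [fA]
        · refine mul_le_mul_of_nonpos_left (hQ i) (sub_nonpos.2 ?_)
          exact_mod_cast hcoeff i (mem_Ioo.2 ⟨hi0, mem_range.1 hi⟩)
    _ < (b + 4).choose 4 * ∑ i ∈ range a, fA μ i x := by
        have : ∑ i ∈ range a, (σ 2 (a + b - i) : ℝ) * (i + 4).choose 4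
            < (b + 4).choose 4 * ∑ i ∈ range a, ((i + 4).choose 4 : ℝ) := by
          exact_mod_cast hsum
        simp only [sub_mul, sum_sub_distrib, ← mul_sum]
        linarith
    _ ≤ fA μ b x * ∑ i ∈ range a, (sigmaA μ (a - i) : ℝ) * fA μ i x := by
        refine mul_le_mul (hQ b) (sum_le_sum fun i hi => ?_) (sum_nonneg fun i _ => hF i)
          (hF b)
        refine le_mul_of_one_le_left (hF i) ?_
        exact_mod_cast one_le_sigmaA hμ1 (by have := mem_range.1 hi; omega)

lemma fA_add_lt_mul_of_le (hμ1 : 1 ≤ μ 1) (hμ : ∀ j, μ j ≤ j) (hx : 5 ≤ x) {a b : ℕ}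
    (ha : 1 ≤ a) (hab : a ≤ b) (hb : 2 ≤ b)
    (hsmall : ∀ i < b, fA μ (a + i) x ≤ fA μ a x * fA μ i x) :
    fA μ (a + b) x < fA μ a x * fA μ b x := by
  have hsplit : ∑ i ∈ range (a + b), (sigmaA μ (a + b - i) : ℝ) * fA μ i x
      = ∑ i ∈ range a, (sigmaA μ (a + b - i) : ℝ) * fA μ i x
        + ∑ i ∈ range b, (sigmaA μ (b - i) : ℝ) * fA μ (a + i) x := by
    simp only [sum_range_add, Nat.add_sub_add_left]
  have hshift : ∑ i ∈ range b, (sigmaA μ (b - i) : ℝ) * fA μ (a + i) x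
      ≤ fA μ a x * ∑ i ∈ range b, (sigmaA μ (b - i) : ℝ) * fA μ i x := by
    rw [mul_sum]
    refine sum_le_sum fun i hi => ?_
    rw [mul_left_comm]
    exact mul_le_mul_of_nonneg_left (hsmall i (mem_range.1 hi)) (Nat.cast_nonneg _)
  refine lt_of_mul_lt_mul_left ?_ (Nat.cast_nonneg (α := ℝ) (a + b))
  calc ((a + b : ℕ) : ℝ) * fA μ (a + b) x
      = x * (∑ i ∈ range a, (sigmaA μ (a + b - i) : ℝ) * fA μ i x
        + ∑ i ∈ range b, (sigmaA μ (b - i) : ℝ) * fA μ (a + i) x) := by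
        rw [natCast_mul_fA, hsplit]
    _ < x * (fA μ b x * ∑ i ∈ range a, (sigmaA μ (a - i) : ℝ) * fA μ i x
        + fA μ a x * ∑ i ∈ range b, (sigmaA μ (b - i) : ℝ) * fA μ i x) := by
        refine mul_lt_mul_of_pos_left ?_ (by linarith)
        exact add_lt_add_of_lt_of_le (sum_sigmaA_mul_fA_lt hμ1 hμ hx ha hab hb) hshift
    _ = fA μ b x * (a * fA μ a x) + fA μ a x * (b * fA μ b x) := by
        rw [natCast_mul_fA, natCast_mul_fA]; ring
    _ = ((a + b : ℕ) : ℝ) * (fA μ a x * fA μ b x) := by push_cast; ring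

lemma fA_one (hμ1 : μ 1 = 1) (x : ℝ) : fA μ 1 x = x := by
  simp [fA, sigmaA_one hμ1]

lemma fA_one_mul_self_sub_fA_two (hμ1 : μ 1 = 1) (x : ℝ) :
    fA μ 1 x * fA μ 1 x - fA μ 2 x = x / 2 * (x - 1 - 2 * μ 2) := by
  rw [fA_one hμ1, fA]
  simp [sum_range_succ, fA_one hμ1, sigmaA_one hμ1, sigmaA_two hμ1, fA]
  ring

lemma fA_two_le_fA_one_mul_self (hμ1 : μ 1 = 1) (hμ : ∀ j, μ j ≤ j) (hx : 5 ≤ x) :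
    fA μ 2 x ≤ fA μ 1 x * fA μ 1 x := by
  have hdiff := fA_one_mul_self_sub_fA_two hμ1 x
  have hμ2 : (μ 2 : ℝ) ≤ 2 := by exact_mod_cast hμ 2
  nlinarith

lemma fA_add_lt_mul (hμ1 : μ 1 = 1) (hμ : ∀ j, μ j ≤ j) (hx : 5 ≤ x) {a b : ℕ}
    (ha : 1 ≤ a) (hb : 1 ≤ b) (hab : ¬(a = 1 ∧ b = 1)) :
    fA μ (a + b) x < fA μ a x * fA μ b x := by
  induction hn : a + b using Nat.strong_induction_on generalizing a b with
  | _ n ih =>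
  subst hn
  wlog hle : a ≤ b generalizing a b
  · rw [add_comm, mul_comm]
    exact this hb ha (by tauto) (by rwa [add_comm]) (by omega)
  refine fA_add_lt_mul_of_le hμ1.ge hμ hx ha hle (by omega) fun i hi => ?_
  rcases Nat.eq_zero_or_pos i with rfl | hi0
  · simp [fA]
  by_cases h11 : a = 1 ∧ i = 1
  · obtain ⟨rfl, rfl⟩ := h11
    exact fA_two_le_fA_one_mul_self hμ1 hμ hx
  · exact (ih (a + i) (by omega) ha hi0 h11 rfl).le

end Inequality

/-- Polynomization of the Bessenrodt-Ono inequality for a multiset A with mu(1) = 1 and mu(j) <= j: f_{A,a}(x) f_{A,b}(x) > f_{A,a+b}(x) for all real x >= 5 and a, b >= 1 except a = b = 1; for a = b = 1, f_{A,1}(5)^2 >= f_{A,2}(5) (equality iff mu(2) = 2) and f_{A,1}(x)^2 > f_{A,2}(x) for x > 5. -/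
theorem stmt_17 (μ : ℕ → ℕ) (hμ1 : μ 1 = 1) (hμ : ∀ j, μ j ≤ j) :
    (∀ a b : ℕ, 1 ≤ a → 1 ≤ b → ¬(a = 1 ∧ b = 1) → ∀ x : ℝ, 5 ≤ x →
      fA μ a x * fA μ b x > fA μ (a + b) x) ∧
    fA μ 1 5 * fA μ 1 5 ≥ fA μ 2 5 ∧
    (fA μ 1 5 * fA μ 1 5 = fA μ 2 5 ↔ μ 2 = 2) ∧
    (∀ x : ℝ, 5 < x → fA μ 1 x * fA μ 1 x > fA μ 2 x) := by
  have hdiff := fA_one_mul_self_sub_fA_two hμ1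
  have hμ2 : (μ 2 : ℝ) ≤ 2 := by exact_mod_cast hμ 2
  refine ⟨fun a b ha hb hab x hx => fA_add_lt_mul hμ1 hμ hx ha hb hab,
    fA_two_le_fA_one_mul_self hμ1 hμ le_rfl, ?_, fun x hx => ?_⟩
  · rw [← sub_eq_zero, hdiff]
    constructor
    · intro h
      exact_mod_cast (by linarith : (μ 2 : ℝ) = 2)
    · intro h
      rw [h]; norm_num
  · have := hdiff x
    nlinarith
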